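/- (Summed residual bound (61+).) Under the stated setup, let α* ∈ ℝⁿ and ω* ∈ ℝ^p satisfy Z·α* = 0 and Φ(a) + ⟨ω*, Z·a⟩ ≥ Φ(α*) for all a ∈ ℝⁿ. Then for every natural number T ≥ 2d+1: Σ_{t=0}^{T} ½‖α(t) − α(t+1)‖²_{C⁻¹ − H − ZᵀBZ} + Σ_{t=0}^{T} ½‖ω((t−d)⁺) − ω(t+1)‖²_{S⁻¹} ≤ ½‖α* − α(0)‖²_{C⁻¹} + ½(1+d)‖ω* − ω(0)‖²_{S⁻¹} + Γ/2. -/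

import Mathlib

open Matrix Finset

/-- The quadratic form `‖x‖²_A = xᵀ A x`. -/
noncomputable def qf {k : ℕ} (A : Matrix (Fin k) (Fin k) ℝ) (x : Fin k → ℝ) : ℝ :=
  x ⬝ᵥ (A *ᵥ x)

/-!
Each iteration is a forward–backward step on the augmented Lagrangian followed by a delayed dual
ascent step. The optimality condition of the proximal step, convexity and `H`-smoothness of `H_s`,
and the saddle-point inequality at `α (t + 1)`, rewritten with the three-point identity in the
`C⁻¹`- and `S⁻¹`-norms, give a per-step inequality whose distances to `α*` and `ω*` telescope.
The delay is paid for three times: the stale dual distances `‖ω* - ω (t - d)‖²` leave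
`(d + 1) ‖ω* - ω 0‖²`, the stale coupling terms `‖α (t - d)‖²_{ZᵀSZ}` leave `(d + 1) κ²`, and
`α (t - d) - α (t + 1)` is a sum of at most `d + 1` consecutive residuals, so by Cauchy–Schwarz and
double counting it costs the factor `(1 + d)²` in `B`.
-/

section

variable {k m : ℕ}

lemma qf_nonneg {A : Matrix (Fin k) (Fin k) ℝ} (hA : A.PosSemidef) (x : Fin k → ℝ) :
    0 ≤ qf A x := by
  simpa [qf] using hA.dotProduct_mulVec_nonneg x

lemma qf_neg (A : Matrix (Fin k) (Fin k) ℝ) (x : Fin k → ℝ) : qf A (-x) = qf A x := by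
  simp [qf, mulVec_neg]

lemma qf_sub_comm (A : Matrix (Fin k) (Fin k) ℝ) (x y : Fin k → ℝ) :
    qf A (x - y) = qf A (y - x) := by
  rw [← neg_sub, qf_neg]

lemma qf_smul (A : Matrix (Fin k) (Fin k) ℝ) (c : ℝ) (x : Fin k → ℝ) :
    qf A (c • x) = c ^ 2 * qf A x := by
  simp only [qf, mulVec_smul, dotProduct_smul, smul_dotProduct, smul_eq_mul]
  ring

lemma qf_matrix_sub (A B : Matrix (Fin k) (Fin k) ℝ) (x : Fin k → ℝ) :
    qf (A - B) x = qf A x - qf B x := by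
  simp [qf, sub_mulVec, dotProduct_sub]

lemma qf_matrix_smul (c : ℝ) (A : Matrix (Fin k) (Fin k) ℝ) (x : Fin k → ℝ) :
    qf (c • A) x = c * qf A x := by
  simp [qf, smul_mulVec, dotProduct_smul]

lemma qf_mulVec (A : Matrix (Fin m) (Fin m) ℝ) (B : Matrix (Fin m) (Fin k) ℝ) (x : Fin k → ℝ) :
    qf A (B *ᵥ x) = qf (Bᵀ * A * B) x := by
  rw [qf, qf, ← mulVec_mulVec, ← mulVec_mulVec, dotProduct_mulVec x Bᵀ, vecMul_transpose]

lemma qf_inv_mulVec {S : Matrix (Fin m) (Fin m) ℝ} (hS : S.IsSymm) (hSdet : IsUnit S.det)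
    (y : Fin m → ℝ) : qf S⁻¹ (S *ᵥ y) = qf S y := by
  rw [qf_mulVec, hS.eq, mul_nonsing_inv S hSdet, one_mul]

lemma Matrix.IsSymm.dotProduct_mulVec_comm {A : Matrix (Fin k) (Fin k) ℝ} (hA : A.IsSymm)
    (x y : Fin k → ℝ) : x ⬝ᵥ (A *ᵥ y) = y ⬝ᵥ (A *ᵥ x) := by
  rw [dotProduct_mulVec, ← mulVec_transpose, hA.eq, dotProduct_comm]

lemma qf_add {A : Matrix (Fin k) (Fin k) ℝ} (hA : A.IsSymm) (x y : Fin k → ℝ) :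
    qf A (x + y) = qf A x + 2 * (x ⬝ᵥ (A *ᵥ y)) + qf A y := by
  simp only [qf, mulVec_add, dotProduct_add, add_dotProduct]
  linarith [hA.dotProduct_mulVec_comm x y]

lemma two_mul_dotProduct_mulVec {A : Matrix (Fin k) (Fin k) ℝ} (hA : A.IsSymm) (x y : Fin k → ℝ) :
    2 * (x ⬝ᵥ (A *ᵥ y)) = qf A x + qf A y - qf A (x - y) := by
  have h := qf_add hA x (-y)
  rw [qf_neg, mulVec_neg, dotProduct_neg, ← sub_eq_add_neg] at h
  linarith

lemma two_mul_dotProduct_mulVec_three_point {A : Matrix (Fin k) (Fin k) ℝ} (hA : A.IsSymm)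
    (a b c : Fin k → ℝ) :
    2 * ((a - b) ⬝ᵥ (A *ᵥ (c - a))) = qf A (c - b) - qf A (c - a) - qf A (a - b) := by
  simp only [qf, mulVec_sub, dotProduct_sub, sub_dotProduct]
  linarith [hA.dotProduct_mulVec_comm c b, hA.dotProduct_mulVec_comm c a,
    hA.dotProduct_mulVec_comm a b]

lemma qf_sum_le {ι : Type*} {A : Matrix (Fin k) (Fin k) ℝ} (hA : A.PosSemidef) (s : Finset ι)
    (v : ι → Fin k → ℝ) : qf A (∑ i ∈ s, v i) ≤ #s * ∑ i ∈ s, qf A (v i) := by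
  have hsymm : A.IsSymm := isHermitian_iff_isSymm.1 hA.isHermitian
  have hpair : ∀ i j, 2 * (v i ⬝ᵥ (A *ᵥ v j)) ≤ qf A (v i) + qf A (v j) := fun i j => by
    linarith [two_mul_dotProduct_mulVec hsymm (v i) (v j), qf_nonneg hA (v i - v j)]
  calc qf A (∑ i ∈ s, v i) = ∑ i ∈ s, ∑ j ∈ s, v i ⬝ᵥ (A *ᵥ v j) := by
        simp only [qf, mulVec_sum, sum_dotProduct, dotProduct_sum]
        exact sum_comm
    _ ≤ ∑ i ∈ s, ∑ j ∈ s, (qf A (v i) + qf A (v j)) / 2 :=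
        sum_le_sum fun i _ => sum_le_sum fun j _ => by linarith [hpair i j]
    _ = #s * ∑ i ∈ s, qf A (v i) := by
        simp only [add_div, sum_add_distrib, sum_const, nsmul_eq_mul, ← mul_sum, ← sum_div]
        ring

lemma nonpos_of_forall_le_mul {a b : ℝ} (h : ∀ θ : ℝ, 0 < θ → θ ≤ 1 → a ≤ θ * b) : a ≤ 0 := by
  have hlim : Filter.Tendsto (fun θ : ℝ => θ * b) (nhdsWithin 0 (Set.Ioi 0)) (nhds 0) := by
    simpa using ((continuous_mul_const b).tendsto 0).mono_left nhdsWithin_le_nhds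
  exact ge_of_tendsto hlim <| Filter.mem_of_superset (Ioc_mem_nhdsGT one_pos)
    fun θ hθ => h θ hθ.1 hθ.2

lemma ConvexOn.le_add_dotProduct_of_isMin_prox {P : Matrix (Fin k) (Fin k) ℝ}
    (hP : P.IsSymm) {f : (Fin k → ℝ) → ℝ} (hf : ConvexOn ℝ Set.univ f) {u x : Fin k → ℝ}
    (hx : ∀ v, f x + 1 / 2 * qf P (x - u) ≤ f v + 1 / 2 * qf P (v - u)) (v : Fin k → ℝ) :
    f x ≤ f v + (x - u) ⬝ᵥ (P *ᵥ (v - x)) := by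
  suffices f x - f v - (x - u) ⬝ᵥ (P *ᵥ (v - x)) ≤ 0 by linarith
  -- Compare `x` with `x + θ • (v - x)` and let `θ → 0`.
  refine nonpos_of_forall_le_mul (b := qf P (v - x) / 2) fun θ hθ0 hθ1 => ?_
  have hmin := hx (x + θ • (v - x))
  have hconv : f (x + θ • (v - x)) ≤ (1 - θ) * f x + θ * f v := by
    have h : f ((1 - θ) • x + θ • v) ≤ (1 - θ) • f x + θ • f v :=
      hf.2 (Set.mem_univ x) (Set.mem_univ v) (by linarith) hθ0.le (by ring)
    rwa [show (1 - θ) • x + θ • v = x + θ • (v - x) by module, smul_eq_mul, smul_eq_mul] at h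
  rw [show x + θ • (v - x) - u = (x - u) + θ • (v - x) by abel, qf_add hP, qf_smul,
    mulVec_smul, dotProduct_smul, smul_eq_mul] at hmin
  refine le_of_mul_le_mul_left ?_ hθ0
  linarith

lemma forward_backward_step_le {C H : Matrix (Fin k) (Fin k) ℝ} (hC : C.IsSymm)
    (hCdet : IsUnit C.det) {f g : (Fin k → ℝ) → ℝ} {f' : (Fin k → ℝ) → Fin k → ℝ}
    (hf_conv : ∀ a b, f a + f' a ⬝ᵥ (b - a) ≤ f b)
    (hf_smooth : ∀ a b, f b ≤ f a + f' a ⬝ᵥ (b - a) + 1 / 2 * qf H (b - a))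
    (hg : ConvexOn ℝ Set.univ g) {y c x : Fin k → ℝ}
    (hx : ∀ v, g x + 1 / 2 * qf C⁻¹ (x - (y - C *ᵥ (f' y + c)))
      ≤ g v + 1 / 2 * qf C⁻¹ (v - (y - C *ᵥ (f' y + c))))
    (v : Fin k → ℝ) :
    f x + g x ≤ f v + g v + (x - y) ⬝ᵥ (C⁻¹ *ᵥ (v - x)) + c ⬝ᵥ (v - x) + 1 / 2 * qf H (x - y) := by
  have hprox := hg.le_add_dotProduct_of_isMin_prox hC.inv hx v
  have hCinv : (C *ᵥ (f' y + c)) ⬝ᵥ (C⁻¹ *ᵥ (v - x)) = (f' y + c) ⬝ᵥ (v - x) := by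
    rw [dotProduct_mulVec, ← vecMul_transpose, hC.eq, vecMul_vecMul, mul_nonsing_inv C hCdet,
      vecMul_one]
  rw [sub_sub_eq_add_sub, add_sub_right_comm, add_dotProduct, hCinv] at hprox
  have hlin := hf_conv y v
  have hquad := hf_smooth y x
  simp only [add_dotProduct, dotProduct_sub] at hprox hlin hquad ⊢
  linarith

lemma Matrix.IsSymm.transpose_mul_mul_same {S : Matrix (Fin m) (Fin m) ℝ}
    (hS : S.IsSymm) (Z : Matrix (Fin m) (Fin k) ℝ) : (Zᵀ * S * Z).IsSymm := by
  simp only [IsSymm, transpose_mul, transpose_transpose, hS.eq, Matrix.mul_assoc]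

lemma primal_dual_step_le {P H : Matrix (Fin k) (Fin k) ℝ}
    {S : Matrix (Fin m) (Fin m) ℝ} {Z : Matrix (Fin m) (Fin k) ℝ} (hP : P.IsSymm)
    (hS : S.IsSymm) (hSdet : IsUnit S.det) {Φ : (Fin k → ℝ) → ℝ} {xs x y z : Fin k → ℝ}
    {ws w w' : Fin m → ℝ} (hZxs : Z *ᵥ xs = 0) (hsaddle : Φ xs ≤ Φ x + ws ⬝ᵥ (Z *ᵥ x))
    (hprimal : Φ x ≤ Φ xs + (x - y) ⬝ᵥ (P *ᵥ (xs - x))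
      + (Zᵀ *ᵥ w + (Zᵀ * S * Z) *ᵥ z) ⬝ᵥ (xs - x) + 1 / 2 * qf H (x - y))
    (hw : w' = w + (S * Z) *ᵥ x) :
    qf P (xs - x) + qf S⁻¹ (ws - w') + qf (Zᵀ * S * Z) z + qf (P - H) (y - x)
        + qf S⁻¹ (w - w')
      ≤ qf P (xs - y) + qf S⁻¹ (ws - w) + qf (Zᵀ * S * Z) x + qf (Zᵀ * S * Z) (z - x) := by
  set M := Zᵀ * S * Z
  have hM : M.IsSymm := hS.transpose_mul_mul_same Z
  have hΔw : w' - w = S *ᵥ (Z *ᵥ x) := by rw [hw, add_sub_cancel_left, mulVec_mulVec]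
  have hZx : Z *ᵥ x = S⁻¹ *ᵥ (w' - w) := by
    rw [hΔw, mulVec_mulVec, nonsing_inv_mul S hSdet, one_mulVec]
  have hqΔw : qf S⁻¹ (w - w') = qf M x := by
    rw [qf_sub_comm, hΔw, qf_inv_mulVec hS hSdet, qf_mulVec]
  have hlin : (Zᵀ *ᵥ w + M *ᵥ z) ⬝ᵥ (xs - x) = -(w ⬝ᵥ (Z *ᵥ x)) - z ⬝ᵥ (M *ᵥ x) := by
    have hMxs : M *ᵥ xs = 0 := by simp only [M, ← mulVec_mulVec, hZxs, mulVec_zero]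
    rw [add_dotProduct, mulVec_transpose, ← dotProduct_mulVec, dotProduct_comm (M *ᵥ z),
      hM.dotProduct_mulVec_comm (xs - x), mulVec_sub, mulVec_sub, hZxs, hMxs, zero_sub, zero_sub,
      dotProduct_neg, dotProduct_neg, sub_eq_add_neg]
  have hprimal3 := two_mul_dotProduct_mulVec_three_point hP x y xs
  have hdual3 := two_mul_dotProduct_mulVec_three_point hS.inv w w' ws
  have hdual : (w - w') ⬝ᵥ (S⁻¹ *ᵥ (ws - w)) = -((ws - w) ⬝ᵥ (Z *ᵥ x)) := by
    rw [hZx, hS.inv.dotProduct_mulVec_comm, ← neg_sub w' w, mulVec_neg, dotProduct_neg]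
  have hdual_split := sub_dotProduct ws w (Z *ᵥ x)
  have hcoupling := two_mul_dotProduct_mulVec hM z x
  have hPH : qf (P - H) (y - x) = qf P (x - y) - qf H (x - y) := by
    rw [qf_matrix_sub, qf_sub_comm P, qf_sub_comm H]
  linarith

lemma sum_range_tsub_eq {M : Type*} [AddCommMonoid M] (f : ℕ → M) (d N : ℕ) :
    ∑ t ∈ range (d + 1 + N), f (t - d) = (d + 1) • f 0 + ∑ t ∈ range N, f (t + 1) := by
  rw [sum_range_add]
  congr 1
  · rw [sum_congr rfl fun t ht => by
      rw [Nat.sub_eq_zero_of_le (Nat.lt_succ_iff.1 (mem_range.1 ht))], sum_const, card_range]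
  · exact sum_congr rfl fun t _ => by
      rw [Nat.add_right_comm, Nat.add_assoc, Nat.add_sub_cancel_left]

lemma sum_range_tsub_le (f : ℕ → ℝ) (hf : ∀ t, 0 ≤ f t) (d N : ℕ) :
    ∑ t ∈ range N, f (t - d) ≤ (d + 1) * f 0 + ∑ t ∈ range N, f (t + 1) := by
  calc ∑ t ∈ range N, f (t - d) ≤ ∑ t ∈ range (d + 1 + N), f (t - d) :=
        sum_le_sum_of_subset_of_nonneg (range_subset_range.2 (by omega)) fun t _ _ => hf _
    _ = (d + 1) * f 0 + ∑ t ∈ range N, f (t + 1) := by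
        rw [sum_range_tsub_eq, nsmul_eq_mul, Nat.cast_add_one]

lemma sum_range_succ_le_sum_range_tsub (f : ℕ → ℝ) (hf : 0 ≤ f 0) {K : ℝ} (hK : ∀ t, f t ≤ K)
    (d N : ℕ) : ∑ t ∈ range N, f (t + 1) ≤ (d + 1) * K + ∑ t ∈ range N, f (t - d) := by
  have hsplit := sum_range_tsub_eq f d N
  rw [add_comm (d + 1) N, sum_range_add, nsmul_eq_mul] at hsplit
  have htail : ∑ i ∈ range (d + 1), f (N + i - d) ≤ (d + 1) * K := by
    simpa using sum_le_card_nsmul (range (d + 1)) _ K fun i _ => hK _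
  rw [Nat.cast_add_one] at hsplit
  have hhead : 0 ≤ ((d : ℝ) + 1) * f 0 := mul_nonneg (by positivity) hf
  linarith

lemma sum_range_sum_Ico_tsub_le (a : ℕ → ℝ) (ha : ∀ s, 0 ≤ a s) (d N : ℕ) :
    ∑ t ∈ range N, ∑ s ∈ Ico (t - d) (t + 1), a s ≤ (d + 1) * ∑ s ∈ range N, a s := by
  -- `s` lies in the window `Ico (t - d) (t + 1)` exactly when `s ≤ t ≤ s + d`.
  rw [sum_comm' (t' := range N) (s' := fun s => Ico s (min N (s + d + 1))) fun t s => by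
    simp only [mem_range, mem_Ico]
    omega, mul_sum]
  refine sum_le_sum fun s _ => ?_
  rw [sum_const, nsmul_eq_mul, Nat.card_Ico]
  gcongr
  · exact ha s
  · exact_mod_cast (by omega : min N (s + d + 1) - s ≤ d + 1)

lemma qf_tsub_sub_le {A : Matrix (Fin k) (Fin k) ℝ} (hA : A.PosSemidef)
    (x : ℕ → Fin k → ℝ) (d t : ℕ) :
    qf A (x (t - d) - x (t + 1)) ≤ (d + 1) * ∑ s ∈ Ico (t - d) (t + 1), qf A (x s - x (s + 1)) := by
  have htel : x (t - d) - x (t + 1) = ∑ s ∈ Ico (t - d) (t + 1), (x s - x (s + 1)) := by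
    rw [← neg_sub, ← sum_Ico_sub x (by omega : t - d ≤ t + 1), ← sum_neg_distrib]
    simp only [neg_sub]
  rw [htel]
  refine (qf_sum_le hA _ _).trans
    (mul_le_mul_of_nonneg_right ?_ (sum_nonneg fun s _ => qf_nonneg hA _))
  rw [Nat.card_Ico]
  exact_mod_cast (by omega : t + 1 - (t - d) ≤ d + 1)

lemma sum_qf_tsub_sub_le {A : Matrix (Fin k) (Fin k) ℝ} (hA : A.PosSemidef)
    (x : ℕ → Fin k → ℝ) (d N : ℕ) :
    ∑ t ∈ range N, qf A (x (t - d) - x (t + 1))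
      ≤ (d + 1) ^ 2 * ∑ t ∈ range N, qf A (x t - x (t + 1)) := by
  calc ∑ t ∈ range N, qf A (x (t - d) - x (t + 1))
      ≤ ∑ t ∈ range N, (d + 1) * ∑ s ∈ Ico (t - d) (t + 1), qf A (x s - x (s + 1)) :=
        sum_le_sum fun t _ => qf_tsub_sub_le hA x d t
    _ ≤ (d + 1) * ((d + 1) * ∑ t ∈ range N, qf A (x t - x (t + 1))) := by
        rw [← mul_sum]
        gcongr
        exact sum_range_sum_Ico_tsub_le _ (fun s => qf_nonneg hA _) d N
    _ = (d + 1) ^ 2 * ∑ t ∈ range N, qf A (x t - x (t + 1)) := by ring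

lemma summed_residual_le_of_delayed_step {P G M : Matrix (Fin k) (Fin k) ℝ}
    {Q : Matrix (Fin m) (Fin m) ℝ} (hP : P.PosSemidef) (hQ : Q.PosSemidef) (hM : M.PosSemidef)
    {x : ℕ → Fin k → ℝ} {y : ℕ → Fin m → ℝ} {xs : Fin k → ℝ} {ys : Fin m → ℝ} {d : ℕ} {K : ℝ}
    (hK : ∀ t, qf M (x t) ≤ K)
    (hstep : ∀ t, qf P (xs - x (t + 1)) + qf Q (ys - y (t + 1)) + qf M (x (t - d))
        + qf G (x t - x (t + 1)) + qf Q (y (t - d) - y (t + 1))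
      ≤ qf P (xs - x t) + qf Q (ys - y (t - d)) + qf M (x (t + 1))
        + qf M (x (t - d) - x (t + 1)))
    (N : ℕ) :
    ∑ t ∈ range N, qf G (x t - x (t + 1))
        - (d + 1) ^ 2 * ∑ t ∈ range N, qf M (x t - x (t + 1))
        + ∑ t ∈ range N, qf Q (y (t - d) - y (t + 1))
      ≤ qf P (xs - x 0) + (d + 1) * qf Q (ys - y 0) + (d + 1) * K := by
  have hsum := sum_le_sum fun t (_ : t ∈ range N) => hstep t
  simp only [sum_add_distrib] at hsum
  have htel := sum_range_sub' (fun t => qf P (xs - x t)) N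
  have hlast := qf_nonneg hP (xs - x N)
  have hdual := sum_range_tsub_le (fun t => qf Q (ys - y t)) (fun t => qf_nonneg hQ _) d N
  have hcoupling := sum_range_succ_le_sum_range_tsub (fun t => qf M (x t)) (qf_nonneg hM _) hK d N
  have hcross := sum_qf_tsub_sub_le hM x d N
  simp only [sum_sub_distrib] at htel
  linarith

end

theorem asyn_ddpg_summed_residual_bound_general
    (n p : ℕ) (Z : Matrix (Fin p) (Fin n) ℝ)
    (C Hm : Matrix (Fin n) (Fin n) ℝ) (S : Matrix (Fin p) (Fin p) ℝ)
    (hC : C.PosDef) (hS : S.PosDef)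
    (d : ℕ) (hd : 1 ≤ d)
    (Hs Hr : (Fin n → ℝ) → ℝ) (gs : (Fin n → ℝ) → (Fin n → ℝ))
    (hconv_s : ∀ a b : Fin n → ℝ, Hs a + gs a ⬝ᵥ (b - a) ≤ Hs b)
    (hsmooth : ∀ a b : Fin n → ℝ, Hs b ≤ Hs a + gs a ⬝ᵥ (b - a) + 1 / 2 * qf Hm (b - a))
    (hr : ConvexOn ℝ Set.univ Hr)
    (α : ℕ → Fin n → ℝ) (ω : ℕ → Fin p → ℝ)
    (hα : ∀ t : ℕ, ∀ v : Fin n → ℝ,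
      Hr (α (t + 1)) + 1 / 2 * qf C⁻¹ (α (t + 1) -
          (α t - C *ᵥ (gs (α t) + Zᵀ *ᵥ ω (t - d) + (Zᵀ * S * Z) *ᵥ α (t - d))))
        ≤ Hr v + 1 / 2 * qf C⁻¹ (v -
          (α t - C *ᵥ (gs (α t) + Zᵀ *ᵥ ω (t - d) + (Zᵀ * S * Z) *ᵥ α (t - d)))))
    (hω : ∀ t : ℕ, ω (t + 1) = ω (t - d) + (S * Z) *ᵥ α (t + 1))
    (κ : ℝ) (hbound : ∀ t : ℕ, qf (Zᵀ * S * Z) (α t) ≤ κ ^ 2)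
    (αs : Fin n → ℝ) (hαs : Z *ᵥ αs = 0) (ωs : Fin p → ℝ)
    (hsaddle : ∀ a : Fin n → ℝ, Hs αs + Hr αs ≤ (Hs a + Hr a) + ωs ⬝ᵥ (Z *ᵥ a))
    (T : ℕ) :
    (∑ t ∈ Finset.range (T + 1),
        1 / 2 * qf (C⁻¹ - Hm - Zᵀ * (((1 + d : ℝ)) ^ 2 • S) * Z) (α t - α (t + 1)))
      + (∑ t ∈ Finset.range (T + 1), 1 / 2 * qf S⁻¹ (ω (t - d) - ω (t + 1)))
      ≤ 1 / 2 * qf C⁻¹ (αs - α 0) + 1 / 2 * (1 + d : ℝ) * qf S⁻¹ (ωs - ω 0)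
        + 4 * (d : ℝ) * κ ^ 2 / 2 := by
  have hCs : C.IsSymm := isHermitian_iff_isSymm.1 hC.isHermitian
  have hSs : S.IsSymm := isHermitian_iff_isSymm.1 hS.isHermitian
  have hM : (Zᵀ * S * Z).PosSemidef := by
    simpa only [conjTranspose_eq_transpose_of_trivial] using
      hS.posSemidef.conjTranspose_mul_mul_same Z
  have hstep := fun t => primal_dual_step_le hCs.inv hSs hS.det_pos.ne'.isUnit
    (Φ := fun a => Hs a + Hr a) hαs (hsaddle _)
    (forward_backward_step_le hCs hC.det_pos.ne'.isUnit hconv_s hsmooth hr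
      (fun v => by simpa only [add_assoc] using hα t v) αs) (hω t)
  have hsum := summed_residual_le_of_delayed_step hC.inv.posSemidef hS.inv.posSemidef hM
    hbound hstep (T + 1)
  have hB : ∀ v, qf (C⁻¹ - Hm - Zᵀ * (((1 + d : ℝ)) ^ 2 • S) * Z) v
      = qf (C⁻¹ - Hm) v - (d + 1) ^ 2 * qf (Zᵀ * S * Z) v := fun v => by
    rw [Matrix.mul_smul, Matrix.smul_mul, qf_matrix_sub, qf_matrix_smul, add_comm (1 : ℝ)]
  have hκ : ((d : ℝ) + 1) * κ ^ 2 ≤ 4 * d * κ ^ 2 :=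
    mul_le_mul_of_nonneg_right (by linarith [(Nat.one_le_cast (α := ℝ)).2 hd]) (sq_nonneg κ)
  simp only [hB, ← mul_sum, mul_sub, sum_sub_distrib]
  linarith

/-- summed residual bound (61+) of the Asyn-DDPG algorithm. -/
theorem asyn_ddpg_summed_residual_bound
    (n p : ℕ) (Z : Matrix (Fin p) (Fin n) ℝ)
    (C Hm : Matrix (Fin n) (Fin n) ℝ) (S : Matrix (Fin p) (Fin p) ℝ)
    (hC : C.PosDef) (hHm : Hm.PosDef) (hS : S.PosDef)
    (d : ℕ) (hd : 1 ≤ d)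
    (Hs Hr : (Fin n → ℝ) → ℝ) (gs : (Fin n → ℝ) → (Fin n → ℝ))
    (hconv_s : ∀ a b : Fin n → ℝ, Hs a + gs a ⬝ᵥ (b - a) ≤ Hs b)
    (hsmooth : ∀ a b : Fin n → ℝ, Hs b ≤ Hs a + gs a ⬝ᵥ (b - a) + 1 / 2 * qf Hm (b - a))
    (hr : ConvexOn ℝ Set.univ Hr)
    (α : ℕ → Fin n → ℝ) (ω : ℕ → Fin p → ℝ)
    (hα : ∀ t : ℕ, ∀ v : Fin n → ℝ,
      Hr (α (t + 1)) + 1 / 2 * qf C⁻¹ (α (t + 1) -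
          (α t - C *ᵥ (gs (α t) + Zᵀ *ᵥ ω (t - d) + (Zᵀ * S * Z) *ᵥ α (t - d))))
        ≤ Hr v + 1 / 2 * qf C⁻¹ (v -
          (α t - C *ᵥ (gs (α t) + Zᵀ *ᵥ ω (t - d) + (Zᵀ * S * Z) *ᵥ α (t - d)))))
    (hω : ∀ t : ℕ, ω (t + 1) = ω (t - d) + (S * Z) *ᵥ α (t + 1))
    (hstep1 : (C⁻¹ - Hm - Zᵀ * (((1 + d : ℝ)) ^ 2 • S) * Z).PosSemidef)
    (hstep2 : (C⁻¹ - Zᵀ * S * Z).PosDef)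
    (κ : ℝ) (hκ : 0 ≤ κ) (hbound : ∀ t : ℕ, qf (Zᵀ * S * Z) (α t) ≤ κ ^ 2)
    (αs : Fin n → ℝ) (hαs : Z *ᵥ αs = 0) (ωs : Fin p → ℝ)
    (hsaddle : ∀ a : Fin n → ℝ, Hs αs + Hr αs ≤ (Hs a + Hr a) + ωs ⬝ᵥ (Z *ᵥ a))
    (T : ℕ) (hT : 2 * d + 1 ≤ T) :
    (∑ t ∈ Finset.range (T + 1),
        1 / 2 * qf (C⁻¹ - Hm - Zᵀ * (((1 + d : ℝ)) ^ 2 • S) * Z) (α t - α (t + 1)))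
      + (∑ t ∈ Finset.range (T + 1), 1 / 2 * qf S⁻¹ (ω (t - d) - ω (t + 1)))
      ≤ 1 / 2 * qf C⁻¹ (αs - α 0) + 1 / 2 * (1 + d : ℝ) * qf S⁻¹ (ωs - ω 0)
        + 4 * (d : ℝ) * κ ^ 2 / 2 :=
  asyn_ddpg_summed_residual_bound_general n p Z C Hm S hC hS d hd Hs Hr gs hconv_s hsmooth hr α ω hα
    hω κ hbound αs hαs ωs hsaddle T
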